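/- Let K be a simplicial complex in which every face that is not a facet is contained in at least two facets. If every proper induced subcomplex of K is shellable, then K is shellable. In particular, no pseudomanifold without boundary is an obstruction to shellability. -/

import Mathlib

open Finset

variable {V : Type*} [DecidableEq V]

/-- A (finite abstract) simplicial complex: a finset of finsets closed under subsets. -/
def IsComplex (K : Finset (Finset V)) : Prop :=
  ∀ F ∈ K, ∀ G ⊆ F, G ∈ K

/-- The facets (maximal faces) of a complex. -/
def facets (K : Finset (Finset V)) : Finset (Finset V) := by
  classical exact K.filter (fun F => ∀ G ∈ K, F ⊆ G → F = G)

/-- `L` is a shelling order of the facets of `K`: for each `i ≥ 2` (0-indexed `i ≥ 1`),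
the intersection of the closed simplex on `F_i` with the union of the previous closed simplices
is pure of dimension `dim F_i - 1`: every face `G` of the intersection is contained in a face `H`
of the intersection with `H.card = F_i.card - 1`. -/
def IsShelling (K : Finset (Finset V)) (L : List (Finset V)) : Prop :=
  L.Nodup ∧ L.toFinset = facets K ∧
  ∀ i : Fin L.length, i.1 ≠ 0 → ∀ G ⊆ L.get i,
    (∃ j : Fin L.length, j < i ∧ G ⊆ L.get j) →
    ∃ H, G ⊆ H ∧ H ⊆ L.get i ∧ H.card + 1 = (L.get i).card ∧
      ∃ j : Fin L.length, j < i ∧ H ⊆ L.get j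

/-- A complex is shellable if it admits a shelling order of its facets. -/
def Shellable (K : Finset (Finset V)) : Prop := ∃ L, IsShelling K L

/-- The subcomplex of `K` induced by a vertex subset `U`. -/
def inducedSub (K : Finset (Finset V)) (U : Finset V) : Finset (Finset V) :=
  K.filter (fun F => F ⊆ U)

/-- The vertex set of a complex. -/
def verts (K : Finset (Finset V)) : Finset V := K.sup id

/-- The link of a vertex `v` in `K`. -/
def link (K : Finset (Finset V)) (v : V) : Finset (Finset V) :=
  K.filter (fun F => v ∉ F ∧ insert v F ∈ K)

/-- A complex is pure if all of its facets have the same dimension. -/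
def IsPure (K : Finset (Finset V)) : Prop :=
  ∀ F ∈ facets K, ∀ G ∈ facets K, F.card = G.card

section Aux

variable {V : Type*} [DecidableEq V]

lemma mem_facets {K : Finset (Finset V)} {F : Finset V} :
    F ∈ facets K ↔ F ∈ K ∧ ∀ G ∈ K, F ⊆ G → F = G := by
  simp [facets]

lemma facets_subset {K : Finset (Finset V)} : facets K ⊆ K := by
  intro F hF; exact (mem_facets.1 hF).1

lemma subset_verts {K : Finset (Finset V)} {F : Finset V} (hF : F ∈ K) : F ⊆ verts K :=
  Finset.le_sup (f := id) hF

lemma exists_facet {K : Finset (Finset V)} {F : Finset V} (hF : F ∈ K) :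
    ∃ G ∈ facets K, F ⊆ G := by
  classical
  obtain ⟨G, hG, hmax⟩ := Finset.exists_max_image (K.filter (fun A => F ⊆ A)) Finset.card
    ⟨F, by simp [hF]⟩
  rw [Finset.mem_filter] at hG
  refine ⟨G, mem_facets.2 ⟨hG.1, ?_⟩, hG.2⟩
  intro A hA hGA
  exact Finset.eq_of_subset_of_card_le hGA
    (hmax A (Finset.mem_filter.2 ⟨hA, hG.2.trans hGA⟩))

/-! ### Shelling conditions via list decompositions -/

/-- The shelling condition for a single facet `F` relative to a list of earlier facets. -/
def ShellCond (F : Finset V) (l : List (Finset V)) : Prop :=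
  ∀ G ⊆ F, (∃ E ∈ l, G ⊆ E) →
    ∃ H, G ⊆ H ∧ H ⊆ F ∧ H.card + 1 = F.card ∧ ∃ E ∈ l, H ⊆ E

/-- Decomposition form of the shelling condition. -/
def ShellAux (L : List (Finset V)) : Prop :=
  ∀ l1 F l2, L = l1 ++ F :: l2 → ShellCond F l1

lemma shellAux_nil : ShellAux ([] : List (Finset V)) := by
  intro l1 F l2 h
  exact absurd h (by simp)

lemma shellAux_concat {l : List (Finset V)} {F : Finset V} :
    ShellAux (l ++ [F]) ↔ ShellAux l ∧ ShellCond F l := by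
  constructor
  · intro h
    refine ⟨?_, h l F [] rfl⟩
    intro l1 F' l2 hdec
    exact h l1 F' (l2 ++ [F]) (by rw [hdec]; simp)
  · rintro ⟨h1, h2⟩ l1 F' l2 hdec
    rcases List.eq_nil_or_concat l2 with rfl | ⟨l2', x, rfl⟩
    · obtain ⟨h3, h4⟩ := List.append_inj' hdec.symm rfl
      rw [List.cons.injEq] at h4
      rw [h3, h4.1]
      exact h2
    · rw [List.concat_eq_append, ← List.cons_append, ← List.append_assoc] at hdec
      obtain ⟨h3, _⟩ := List.append_inj' hdec rfl
      exact h1 l1 F' l2' h3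

lemma shellAux_singleton {F : Finset V} : ShellAux [F] := by
  have := shellAux_concat (l := ([] : List (Finset V))) (F := F)
  rw [List.nil_append] at this
  refine this.2 ⟨shellAux_nil, ?_⟩
  rintro G - ⟨E, hE, -⟩
  exact absurd hE (by simp)

lemma isShelling_iff {K : Finset (Finset V)} {L : List (Finset V)} :
    IsShelling K L ↔ L.Nodup ∧ L.toFinset = facets K ∧ ShellAux L := by
  unfold IsShelling
  refine and_congr_right fun _ => and_congr_right fun _ => ?_
  constructor
  · intro h l1 F l2 hdec G hGF ⟨E, hEl1, hGE⟩
    subst hdec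
    have hlen : l1.length < (l1 ++ F :: l2).length := by simp
    have hget : (l1 ++ F :: l2).get ⟨l1.length, hlen⟩ = F := by
      show (l1 ++ F :: l2)[l1.length] = F
      rw [List.getElem_append_right (le_refl _)]
      simp
    obtain ⟨jn, hjn, hjE⟩ := List.mem_iff_getElem.1 hEl1
    have hjn' : jn < (l1 ++ F :: l2).length := lt_trans hjn hlen
    have hLj : (l1 ++ F :: l2)[jn] = E := by
      rw [List.getElem_append_left hjn]; exact hjE
    have h0 : l1.length ≠ 0 := by
      intro h0; rw [h0] at hjn; omega
    obtain ⟨H, hGH, hHF, hcard, j, hjlt, hHj⟩ :=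
      h ⟨l1.length, hlen⟩ h0 G (by rw [hget]; exact hGF)
        ⟨⟨jn, hjn'⟩, hjn, by show G ⊆ (l1 ++ F :: l2)[jn]; rw [hLj]; exact hGE⟩
    rw [hget] at hHF hcard
    refine ⟨H, hGH, hHF, hcard, (l1 ++ F :: l2).get j, ?_, hHj⟩
    have hjl : j.1 < l1.length := hjlt
    have : (l1 ++ F :: l2).get j = l1[j.1] := by
      show (l1 ++ F :: l2)[j.1] = _
      rw [List.getElem_append_left hjl]
    rw [this]
    exact List.getElem_mem _
  · intro h i hi0 G hGF ⟨j, hji, hGj⟩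
    have hdec : L = L.take i.1 ++ L.get i :: L.drop (i.1 + 1) := by
      conv_lhs => rw [← List.take_append_drop i.1 L]
      rw [List.drop_eq_getElem_cons i.2]
      rfl
    have htl : (L.take i.1).length = i.1 := by simp [Nat.min_eq_left (le_of_lt i.2)]
    have hmemtake : L.get j ∈ L.take i.1 := by
      have hj' : j.1 < (L.take i.1).length := by rw [htl]; exact hji
      have : (L.take i.1)[j.1] = L[j.1] := List.getElem_take
      rw [List.mem_iff_getElem]
      exact ⟨j.1, hj', this⟩
    obtain ⟨H, hGH, hHF, hcard, E, hEt, hHE⟩ :=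
      h (L.take i.1) (L.get i) (L.drop (i.1 + 1)) hdec G hGF ⟨L.get j, hmemtake, hGj⟩
    obtain ⟨jn, hjn, hjE⟩ := List.mem_iff_getElem.1 hEt
    rw [htl] at hjn
    have hjn' : jn < L.length := lt_trans hjn i.2
    refine ⟨H, hGH, hHF, hcard, ⟨jn, hjn'⟩, hjn, ?_⟩
    show H ⊆ L[jn]
    have : (L.take i.1)[jn]'(by rw [htl]; exact hjn) = L[jn] := List.getElem_take
    rw [← this, hjE]
    exact hHE

/-! ### Links -/

lemma mem_link {K : Finset (Finset V)} {v : V} {F : Finset V} :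
    F ∈ link K v ↔ F ∈ K ∧ v ∉ F ∧ insert v F ∈ K := by
  simp [link]

lemma link_isComplex {K : Finset (Finset V)} (hK : IsComplex K) (v : V) :
    IsComplex (link K v) := by
  intro F hF G hGF
  rw [mem_link] at hF ⊢
  exact ⟨hK F hF.1 G hGF, fun hv => hF.2.1 (hGF hv),
    hK _ hF.2.2 _ (Finset.insert_subset_insert v hGF)⟩

lemma facets_link {K : Finset (Finset V)} (hK : IsComplex K) {v : V} {F : Finset V} :
    F ∈ facets (link K v) ↔ v ∉ F ∧ insert v F ∈ facets K := by
  constructor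
  · intro h
    obtain ⟨hmem, hmax⟩ := mem_facets.1 h
    obtain ⟨hFK, hvF, hiF⟩ := mem_link.1 hmem
    refine ⟨hvF, mem_facets.2 ⟨hiF, ?_⟩⟩
    intro A hA hsub
    have hvA : v ∈ A := hsub (Finset.mem_insert_self v F)
    have hAe : A.erase v ∈ link K v := by
      rw [mem_link]
      refine ⟨hK A hA _ (Finset.erase_subset v A), Finset.notMem_erase v A, ?_⟩
      rw [Finset.insert_erase hvA]; exact hA
    have hFsub : F ⊆ A.erase v := by
      intro x hx
      exact Finset.mem_erase.2 ⟨fun h => hvF (h ▸ hx),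
        hsub (Finset.mem_insert_of_mem hx)⟩
    have := hmax _ hAe hFsub
    rw [this, Finset.insert_erase hvA]
  · rintro ⟨hvF, hfac⟩
    obtain ⟨hiK, hmax⟩ := mem_facets.1 hfac
    have hFK : F ∈ K := hK _ hiK _ (Finset.subset_insert v F)
    refine mem_facets.2 ⟨mem_link.2 ⟨hFK, hvF, hiK⟩, ?_⟩
    intro B hB hFB
    obtain ⟨hBK, hvB, hiB⟩ := mem_link.1 hB
    have := hmax _ hiB (Finset.insert_subset_insert v hFB)
    calc F = (insert v F).erase v := by rw [Finset.erase_insert hvF]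
    _ = (insert v B).erase v := by rw [this]
    _ = B := by rw [Finset.erase_insert hvB]

lemma verts_link_subset {K : Finset (Finset V)} {v : V} :
    verts (link K v) ⊆ (verts K).erase v := by
  intro w hw
  rw [verts, Finset.mem_sup] at hw
  obtain ⟨F, hF, hwF⟩ := hw
  obtain ⟨hFK, hvF, -⟩ := mem_link.1 hF
  exact Finset.mem_erase.2 ⟨fun h => hvF (h ▸ hwF), subset_verts hFK hwF⟩

lemma link_htwo {K : Finset (Finset V)} (hK : IsComplex K)
    (htwo : ∀ F ∈ K, F ∉ facets K →
      ∃ G ∈ facets K, ∃ H ∈ facets K, G ≠ H ∧ F ⊆ G ∧ F ⊆ H) (v : V) :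
    ∀ F ∈ link K v, F ∉ facets (link K v) →
      ∃ G ∈ facets (link K v), ∃ H ∈ facets (link K v), G ≠ H ∧ F ⊆ G ∧ F ⊆ H := by
  intro F hF hnf
  obtain ⟨hFK, hvF, hiF⟩ := mem_link.1 hF
  have hnfi : insert v F ∉ facets K := by
    intro h
    exact hnf ((facets_link hK).2 ⟨hvF, h⟩)
  obtain ⟨A, hA, B, hB, hAB, hFA, hFB⟩ := htwo _ hiF hnfi
  have hvA : v ∈ A := hFA (Finset.mem_insert_self v F)
  have hvB : v ∈ B := hFB (Finset.mem_insert_self v F)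
  refine ⟨A.erase v, ?_, B.erase v, ?_, ?_, ?_, ?_⟩
  · exact (facets_link hK).2 ⟨Finset.notMem_erase v A, by rwa [Finset.insert_erase hvA]⟩
  · exact (facets_link hK).2 ⟨Finset.notMem_erase v B, by rwa [Finset.insert_erase hvB]⟩
  · intro h
    apply hAB
    rw [← Finset.insert_erase hvA, ← Finset.insert_erase hvB, h]
  · intro x hx
    exact Finset.mem_erase.2 ⟨fun h => hvF (h ▸ hx), hFA (Finset.mem_insert_of_mem hx)⟩
  · intro x hx
    exact Finset.mem_erase.2 ⟨fun h => hvF (h ▸ hx), hFB (Finset.mem_insert_of_mem hx)⟩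

lemma mem_inducedSub {K : Finset (Finset V)} {U : Finset V} {F : Finset V} :
    F ∈ inducedSub K U ↔ F ∈ K ∧ F ⊆ U := by
  simp [inducedSub]

lemma inducedSub_isComplex {K : Finset (Finset V)} (hK : IsComplex K) (U : Finset V) :
    IsComplex (inducedSub K U) := by
  intro F hF G hGF
  rw [mem_inducedSub] at hF ⊢
  exact ⟨hK F hF.1 G hGF, hGF.trans hF.2⟩

lemma link_inducedSub {K : Finset (Finset V)} {v : V} (U : Finset V) (hvU : v ∉ U) :
    inducedSub (link K v) U = link (inducedSub K (insert v U)) v := by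
  ext F
  rw [mem_inducedSub, mem_link, mem_link, mem_inducedSub, mem_inducedSub]
  constructor
  · rintro ⟨⟨hFK, hvF, hiF⟩, hFU⟩
    exact ⟨⟨hFK, hFU.trans (Finset.subset_insert v U)⟩, hvF,
      hiF, Finset.insert_subset_insert v hFU⟩
  · rintro ⟨⟨hFK, hFU⟩, hvF, hiF, -⟩
    refine ⟨⟨hFK, hvF, hiF⟩, fun x hx => ?_⟩
    rcases Finset.mem_insert.1 (hFU hx) with rfl | h
    · exact absurd hx hvF
    · exact h

/-! ### Facets of the vertex-deleted subcomplex -/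

lemma facets_induced_erase {K : Finset (Finset V)} (hK : IsComplex K)
    (htwo : ∀ F ∈ K, F ∉ facets K →
      ∃ G ∈ facets K, ∃ H ∈ facets K, G ≠ H ∧ F ⊆ G ∧ F ⊆ H) (v : V) :
    facets (inducedSub K ((verts K).erase v)) = (facets K).filter (fun F => v ∉ F) := by
  ext F
  rw [Finset.mem_filter]
  constructor
  · intro h
    obtain ⟨hmem, hmax⟩ := mem_facets.1 h
    obtain ⟨hFK, hFU⟩ := mem_inducedSub.1 hmem
    have hvF : v ∉ F := fun hv => (Finset.mem_erase.1 (hFU hv)).1 rfl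
    refine ⟨?_, hvF⟩
    by_contra hnf
    obtain ⟨A, hA, B, hB, hAB, hFA, hFB⟩ := htwo _ hFK hnf
    have key : ∀ C, C ∈ facets K → F ⊆ C → C = insert v F := by
      intro C hC hFC
      have hCK := facets_subset hC
      have hvC : v ∈ C := by
        by_contra hvC
        have hCmem : C ∈ inducedSub K ((verts K).erase v) :=
          mem_inducedSub.2 ⟨hCK, fun x hx =>
            Finset.mem_erase.2 ⟨fun h => hvC (h ▸ hx), subset_verts hCK hx⟩⟩
        have := hmax _ hCmem hFC
        exact hnf (this ▸ hC)
      have hCsub : C ⊆ insert v F := by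
        by_contra hCsub
        obtain ⟨w, hwC, hwn⟩ := Finset.not_subset.1 hCsub
        have hw1 : w ≠ v := fun h => hwn (h ▸ Finset.mem_insert_self v F)
        have hw2 : w ∉ F := fun h => hwn (Finset.mem_insert_of_mem h)
        have hins : insert w F ∈ K := hK _ hCK _ (Finset.insert_subset hwC hFC)
        have hinsmem : insert w F ∈ inducedSub K ((verts K).erase v) := by
          refine mem_inducedSub.2 ⟨hins, Finset.insert_subset ?_ hFU⟩
          exact Finset.mem_erase.2 ⟨hw1, subset_verts hCK hwC⟩
        have := hmax _ hinsmem (Finset.subset_insert w F)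
        exact hw2 (this ▸ Finset.mem_insert_self w F)
      exact Finset.Subset.antisymm hCsub (Finset.insert_subset hvC hFC)
    exact hAB ((key A hA hFA).trans (key B hB hFB).symm)
  · rintro ⟨hF, hvF⟩
    obtain ⟨hFK, hmax⟩ := mem_facets.1 hF
    refine mem_facets.2 ⟨mem_inducedSub.2 ⟨hFK, fun x hx =>
      Finset.mem_erase.2 ⟨fun h => hvF (h ▸ hx), subset_verts hFK hx⟩⟩, ?_⟩
    intro B hB hFB
    exact hmax _ (mem_inducedSub.1 hB).1 hFB

lemma erase_subset_facet {K : Finset (Finset V)} (hK : IsComplex K)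
    (htwo : ∀ F ∈ K, F ∉ facets K →
      ∃ G ∈ facets K, ∃ H ∈ facets K, G ≠ H ∧ F ⊆ G ∧ F ⊆ H)
    {v : V} {G : Finset V} (hG : G ∈ facets K) (hvG : v ∈ G) :
    ∃ A ∈ facets K, v ∉ A ∧ G.erase v ⊆ A := by
  obtain ⟨hGK, hmax⟩ := mem_facets.1 hG
  have heK : G.erase v ∈ K := hK _ hGK _ (Finset.erase_subset v G)
  have henf : G.erase v ∉ facets K := by
    intro h
    have heq := (mem_facets.1 h).2 _ hGK (Finset.erase_subset v G)
    have : v ∈ G.erase v := by rw [heq]; exact hvG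
    exact Finset.notMem_erase v G this
  obtain ⟨A, hA, B, hB, hAB, hFA, hFB⟩ := htwo _ heK henf
  have key : ∀ C, C ∈ facets K → G.erase v ⊆ C → v ∈ C → C = G := by
    intro C hC hsub hvC
    have : G ⊆ C := by
      rw [← Finset.insert_erase hvG]
      exact Finset.insert_subset hvC hsub
    exact ((mem_facets.1 hG).2 _ (facets_subset hC) this).symm
  by_cases hvA : v ∈ A
  · by_cases hvB : v ∈ B
    · exact absurd ((key A hA hFA hvA).trans (key B hB hFB hvB).symm) hAB
    · exact ⟨B, hB, hvB, hFB⟩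
  · exact ⟨A, hA, hvA, hFA⟩

/-! ### Link of a shellable complex is shellable -/

lemma shellAux_linkList {v : V} (L : List (Finset V)) (h : ShellAux L) :
    ShellAux ((L.filter (fun F => v ∈ F)).map (fun F => F.erase v)) := by
  induction L using List.reverseRecOn with
  | nil => simpa using shellAux_nil
  | append_singleton l F ih =>
    rw [shellAux_concat] at h
    rw [List.filter_append]
    by_cases hvF : v ∈ F
    · have hfs : List.filter (fun F => decide (v ∈ F)) [F] = [F] := by simp [hvF]
      rw [hfs, List.map_append, List.map_cons, List.map_nil, shellAux_concat]
      refine ⟨ih h.1, ?_⟩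
      rintro G hGF ⟨E, hEl, hGE⟩
      rw [List.mem_map] at hEl
      obtain ⟨E', hE'mem, rfl⟩ := hEl
      rw [List.mem_filter] at hE'mem
      have hvE' : v ∈ E' := by simpa using hE'mem.2
      obtain ⟨H, hGH, hHF, hcard, E'', hE''l, hHE''⟩ :=
        h.2 (insert v G) (Finset.insert_subset hvF (hGF.trans (Finset.erase_subset v F)))
          ⟨E', hE'mem.1, Finset.insert_subset hvE' (hGE.trans (Finset.erase_subset v E'))⟩
      have hvH : v ∈ H := hGH (Finset.mem_insert_self v G)
      have hvG : v ∉ G := fun h => (Finset.notMem_erase v F) (hGF h)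
      refine ⟨H.erase v, ?_, ?_, ?_, E''.erase v, ?_, Finset.erase_subset_erase v hHE''⟩
      · intro x hx
        exact Finset.mem_erase.2 ⟨fun h => hvG (h ▸ hx),
          hGH (Finset.mem_insert_of_mem hx)⟩
      · exact Finset.erase_subset_erase v hHF
      · have h1 : 1 ≤ H.card := Finset.card_pos.2 ⟨v, hvH⟩
        rw [Finset.card_erase_of_mem hvH, Finset.card_erase_of_mem hvF,
          ← hcard, Nat.add_sub_cancel, Nat.sub_add_cancel h1]
      · rw [List.mem_map]
        exact ⟨E'', List.mem_filter.2 ⟨hE''l, by simpa using hHE'' hvH⟩, rfl⟩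
    · have hfs : List.filter (fun F => decide (v ∈ F)) [F] = [] := by simp [hvF]
      rw [hfs, List.append_nil]
      exact ih h.1

lemma link_shellable {K : Finset (Finset V)} (hK : IsComplex K) (v : V)
    (h : Shellable K) : Shellable (link K v) := by
  obtain ⟨L, hL⟩ := h
  rw [isShelling_iff] at hL
  obtain ⟨hnd, htf, hsa⟩ := hL
  refine ⟨(L.filter (fun F => v ∈ F)).map (fun F => F.erase v), isShelling_iff.2 ⟨?_, ?_, ?_⟩⟩
  · refine List.Nodup.map_on ?_ (hnd.filter _)
    intro x hx y hy hxy
    rw [List.mem_filter] at hx hy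
    have hvx : v ∈ x := by simpa using hx.2
    have hvy : v ∈ y := by simpa using hy.2
    rw [← Finset.insert_erase hvx, ← Finset.insert_erase hvy, hxy]
  · ext F
    simp only [List.mem_toFinset, List.mem_map, List.mem_filter]
    constructor
    · rintro ⟨E, ⟨hEL, hvE⟩, rfl⟩
      have hvE' : v ∈ E := by simpa using hvE
      have hEfac : E ∈ facets K := by rw [← htf]; simpa using hEL
      exact (facets_link hK).2 ⟨Finset.notMem_erase v E, by rwa [Finset.insert_erase hvE']⟩
    · intro hF
      obtain ⟨hvF, hif⟩ := (facets_link hK).1 hF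
      refine ⟨insert v F, ⟨?_, by simp⟩, by rw [Finset.erase_insert hvF]⟩
      rw [← List.mem_toFinset, htf]
      exact hif
  · exact shellAux_linkList L hsa

/-! ### Combining a shelling of the deletion with a shelling of the link -/

lemma shellAux_combine {v : V} (L1 L2 : List (Finset V))
    (h1 : ShellAux L1) (h2 : ShellAux L2)
    (hv1 : ∀ E ∈ L1, v ∉ E)
    (hv2 : ∀ F ∈ L2, v ∉ F)
    (hsub : ∀ F ∈ L2, ∃ A ∈ L1, F ⊆ A) :
    ShellAux (L1 ++ L2.map (fun F => insert v F)) := by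
  induction L2 using List.reverseRecOn with
  | nil => simpa using h1
  | append_singleton l2 F ih =>
    rw [shellAux_concat] at h2
    rw [List.map_append, List.map_cons, List.map_nil, ← List.append_assoc, shellAux_concat]
    have hvF : v ∉ F := hv2 F (by simp)
    refine ⟨ih h2.1 (fun F' hF' => hv2 F' (by simp [hF'])) (fun F' hF' => hsub F' (by simp [hF'])), ?_⟩
    rintro G hGF ⟨E, hEl, hGE⟩
    by_cases hvG : v ∈ G
    · rw [List.mem_append] at hEl
      have hvE : v ∈ E := hGE hvG
      rcases hEl with hEl | hEl
      · exact absurd hvE (hv1 E hEl)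
      · rw [List.mem_map] at hEl
        obtain ⟨E', hE'l, rfl⟩ := hEl
        have hGeF : G.erase v ⊆ F := by
          intro x hx
          obtain ⟨hxv, hxG⟩ := Finset.mem_erase.1 hx
          rcases Finset.mem_insert.1 (hGF hxG) with h | h
          · exact absurd h hxv
          · exact h
        have hGeE' : G.erase v ⊆ E' := by
          intro x hx
          obtain ⟨hxv, hxG⟩ := Finset.mem_erase.1 hx
          rcases Finset.mem_insert.1 (hGE hxG) with h | h
          · exact absurd h hxv
          · exact h
        obtain ⟨R, hGR, hRF, hcard, E'', hE''l, hRE''⟩ :=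
          h2.2 (G.erase v) hGeF ⟨E', hE'l, hGeE'⟩
        have hvR : v ∉ R := fun h => hvF (hRF h)
        refine ⟨insert v R, ?_, Finset.insert_subset_insert v hRF, ?_,
          insert v E'', ?_, Finset.insert_subset_insert v hRE''⟩
        · intro x hx
          by_cases hxv : x = v
          · exact hxv ▸ Finset.mem_insert_self v R
          · exact Finset.mem_insert_of_mem (hGR (Finset.mem_erase.2 ⟨hxv, hx⟩))
        · rw [Finset.card_insert_of_notMem hvR, Finset.card_insert_of_notMem hvF, hcard]
        · rw [List.mem_append, List.mem_map]
          exact Or.inr ⟨E'', hE''l, rfl⟩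
    · obtain ⟨A, hAL1, hFA⟩ := hsub F (by simp)
      refine ⟨F, ?_, Finset.subset_insert v F, ?_, A, List.mem_append_left _ hAL1, hFA⟩
      · intro x hx
        rcases Finset.mem_insert.1 (hGF hx) with h | h
        · exact absurd (h ▸ hx) hvG
        · exact h
      · rw [Finset.card_insert_of_notMem hvF]


/-! ### Main induction -/

lemma shellable_of_verts_empty {K : Finset (Finset V)} (hv : verts K = ∅) : Shellable K := by
  have hsub : ∀ F ∈ K, F = ∅ := by
    intro F hF
    have := subset_verts hF
    rw [hv] at this
    exact Finset.subset_empty.1 this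
  rcases Finset.eq_empty_or_nonempty K with hK0 | ⟨F0, hF0⟩
  · refine ⟨[], isShelling_iff.2 ⟨List.nodup_nil, ?_, shellAux_nil⟩⟩
    subst hK0
    simp [facets]
  · have hKs : K = {∅} := by
      apply Finset.eq_singleton_iff_nonempty_unique_mem.2
      exact ⟨⟨F0, hF0⟩, hsub⟩
    subst hKs
    refine ⟨[∅], isShelling_iff.2 ⟨List.nodup_singleton _, ?_, shellAux_singleton⟩⟩
    have hfac : facets ({∅} : Finset (Finset V)) = {∅} := by
      ext F
      rw [mem_facets]
      constructor
      · exact fun h => h.1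
      · intro h
        rw [Finset.mem_singleton] at h
        subst h
        refine ⟨Finset.mem_singleton_self _, ?_⟩
        intro G hG _
        rw [Finset.mem_singleton] at hG
        exact hG.symm
    rw [hfac]
    simp

lemma main_aux : ∀ (n : ℕ) (K : Finset (Finset V)), (verts K).card ≤ n → IsComplex K →
    (∀ F ∈ K, F ∉ facets K → ∃ G ∈ facets K, ∃ H ∈ facets K, G ≠ H ∧ F ⊆ G ∧ F ⊆ H) →
    (∀ U ⊂ verts K, Shellable (inducedSub K U)) → Shellable K := by
  intro n
  induction n with
  | zero =>
    intro K hcard _ _ _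
    exact shellable_of_verts_empty (Finset.card_eq_zero.1 (Nat.le_zero.1 hcard))
  | succ n ih =>
    intro K hcard hK htwo hind
    rcases Finset.eq_empty_or_nonempty (verts K) with hv | ⟨v, hv⟩
    · exact shellable_of_verts_empty hv
    -- the deletion of `v`
    have hU : (verts K).erase v ⊂ verts K := Finset.erase_ssubset hv
    obtain ⟨L1, hL1⟩ := hind _ hU
    rw [isShelling_iff] at hL1
    obtain ⟨hnd1, htf1, hsa1⟩ := hL1
    rw [facets_induced_erase hK htwo v] at htf1
    -- the link of `v`
    have hlkC := link_isComplex hK v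
    have hlk2 := link_htwo hK htwo v
    have hlkind : ∀ U ⊂ verts (link K v), Shellable (inducedSub (link K v) U) := by
      intro U hUlt
      have hUsub : U ⊆ (verts K).erase v := hUlt.1.trans verts_link_subset
      have hvU : v ∉ U := fun h => Finset.notMem_erase v _ (hUsub h)
      rw [link_inducedSub U hvU]
      apply link_shellable (inducedSub_isComplex hK _) v
      apply hind
      have hsub' : insert v U ⊆ verts K :=
        Finset.insert_subset hv (hUsub.trans (Finset.erase_subset v _))
      rw [Finset.ssubset_iff_of_subset hsub']
      obtain ⟨w, hw1, hw2⟩ := Finset.exists_of_ssubset hUlt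
      have hw3 : w ∈ (verts K).erase v := verts_link_subset hw1
      refine ⟨w, Finset.erase_subset v _ hw3, ?_⟩
      intro hmem
      rcases Finset.mem_insert.1 hmem with h | h
      · exact (Finset.mem_erase.1 hw3).1 h
      · exact hw2 h
    have hlkcard : (verts (link K v)).card ≤ n := by
      have h1 := Finset.card_le_card (verts_link_subset (K := K) (v := v))
      rw [Finset.card_erase_of_mem hv] at h1
      have h2 : 1 ≤ (verts K).card := Finset.card_pos.2 ⟨v, hv⟩
      omega
    obtain ⟨L2, hL2⟩ := ih (link K v) hlkcard hlkC hlk2 hlkind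
    rw [isShelling_iff] at hL2
    obtain ⟨hnd2, htf2, hsa2⟩ := hL2
    -- basic facts about the two lists
    have hL1fac : ∀ E ∈ L1, E ∈ facets K ∧ v ∉ E := by
      intro E hE
      have : E ∈ (facets K).filter (fun F => v ∉ F) := by
        rw [← htf1]
        exact List.mem_toFinset.2 hE
      exact Finset.mem_filter.1 this
    have hL2fac : ∀ F ∈ L2, F ∈ facets (link K v) := by
      intro F hF
      rw [← htf2]
      exact List.mem_toFinset.2 hF
    have hv1 : ∀ E ∈ L1, v ∉ E := fun E hE => (hL1fac E hE).2
    have hv2 : ∀ F ∈ L2, v ∉ F := fun F hF =>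
      (mem_link.1 (facets_subset (hL2fac F hF))).2.1
    have hsub : ∀ F ∈ L2, ∃ A ∈ L1, F ⊆ A := by
      intro F hF
      obtain ⟨hvF, hif⟩ := (facets_link hK).1 (hL2fac F hF)
      obtain ⟨A, hA, hvA, hsubA⟩ :=
        erase_subset_facet hK htwo hif (Finset.mem_insert_self v F)
      refine ⟨A, ?_, ?_⟩
      · rw [← List.mem_toFinset, htf1]
        exact Finset.mem_filter.2 ⟨hA, hvA⟩
      · rw [Finset.erase_insert hvF] at hsubA
        exact hsubA
    refine ⟨L1 ++ L2.map (fun F => insert v F), isShelling_iff.2 ⟨?_, ?_, ?_⟩⟩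
    · rw [List.nodup_append]
      refine ⟨hnd1, List.Nodup.map_on ?_ hnd2, ?_⟩
      · intro x hx y hy hxy
        have h' : (insert v x).erase v = (insert v y).erase v := by rw [hxy]
        rwa [Finset.erase_insert (hv2 x hx), Finset.erase_insert (hv2 y hy)] at h'
      · intro a ha c hamem hab
        rw [List.mem_map] at hamem
        obtain ⟨b, hb, rfl⟩ := hamem
        subst hab
        exact hv1 _ ha (Finset.mem_insert_self v b)
    · rw [List.toFinset_append]
      have hmap : (L2.map (fun F => insert v F)).toFinset =
          (facets (link K v)).image (fun F => insert v F) := by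
        ext F
        simp only [List.mem_toFinset, List.mem_map, Finset.mem_image]
        constructor
        · rintro ⟨b, hb, rfl⟩
          exact ⟨b, hL2fac b hb, rfl⟩
        · rintro ⟨b, hb, rfl⟩
          refine ⟨b, ?_, rfl⟩
          rw [← List.mem_toFinset, htf2]
          exact hb
      rw [htf1, hmap]
      ext F
      simp only [Finset.mem_union, Finset.mem_filter, Finset.mem_image]
      constructor
      · rintro (⟨h, -⟩ | ⟨b, hb, rfl⟩)
        · exact h
        · exact ((facets_link hK).1 hb).2
      · intro hF
        by_cases hvF : v ∈ F
        · refine Or.inr ⟨F.erase v, ?_, Finset.insert_erase hvF⟩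
          exact (facets_link hK).2 ⟨Finset.notMem_erase v F, by rwa [Finset.insert_erase hvF]⟩
        · exact Or.inl ⟨hF, hvF⟩
    · exact shellAux_combine L1 L2 hsa1 hsa2 hv1 hv2 hsub

end Aux

/-- If every nonfacet face of `K` is contained in at least two facets (e.g. if `K` is a
pseudomanifold without boundary) and every proper induced subcomplex of `K` is shellable,
then `K` is shellable; in particular such a `K` is never an obstruction to shellability. -/
theorem stmt10 (K : Finset (Finset V)) (hK : IsComplex K)
    (htwo : ∀ F ∈ K, F ∉ facets K →
      ∃ G ∈ facets K, ∃ H ∈ facets K, G ≠ H ∧ F ⊆ G ∧ F ⊆ H)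
    (hind : ∀ U ⊂ verts K, Shellable (inducedSub K U)) :
    Shellable K :=
  main_aux (verts K).card K le_rfl hK htwo hind
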